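/- arXiv:1803.06074 — 2 statements merged into one kernel-verified Lean document; each statement's English description precedes it below -/
import Mathlib

section
/- Let G be a bipartite simple graph with bipartition (A, B) and let k be a positive integer. Construct G' from G by adding two new vertex-disjoint (k,k)-bicliques G_1 (with bipartition (A_1, B_1)) and G_2 (with bipartition (A_2, B_2)), together with all edges between each vertex of B_1 and each vertex of A, and all edges between each vertex of B and each vertex of A_2. Let V_s = V(G_1) and V_t = V(G_2). Then G contains a (k,k)-biclique as a subgraph if and only if there is a sequence of TJ steps in G' transforming V_s into V_t in which every intermediate vertex subset induces a subgraph of G' containing a spanning (k,k)-biclique. -/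
/-!
If `G` has a biclique `X ∪ Y` with `X ⊆ A` and `Y ⊆ B`, the tokens move one side at a time,
`A₁ ∪ B₁ → B₁ ∪ X → X ∪ Y → Y ∪ A₂ → A₂ ∪ B₂`; every intermediate set is feasible because the
side that stays put is complete to both the old and the new side.

Conversely, the neighbours of `V(G₁)` lie in `N₁ = V(G₁) ∪ A` and those of `V(G₂)` in
`N₂ = V(G₂) ∪ B`, and `N₁`, `N₂` are disjoint. A feasible set meeting `V(G₁)` thus has more
than `k` vertices in `N₁` (the vertex and its `k` partners), and likewise for `G₂`; since two
consecutive sets of a TJ sequence span only `2k + 1` vertices, the first set of the sequence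
avoiding `V(G₁)` also avoids `V(G₂)`, so it is a biclique of `G`.
-/

namespace Stmt18

/-- The vertex type of `G'`: the vertices of `G` plus the vertices of the two new
`(k,k)`-bicliques `G_1` (parts `A_1`, `B_1`) and `G_2` (parts `A_2`, `B_2`). -/
abbrev Wt (V : Type*) (k : ℕ) := V ⊕ ((Fin k ⊕ Fin k) ⊕ (Fin k ⊕ Fin k))

variable {V : Type*}

/-- A vertex of `A_1`. -/
def vA1 {k : ℕ} (a : Fin k) : Wt V k := Sum.inr (Sum.inl (Sum.inl a))

/-- A vertex of `B_1`. -/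
def vB1 {k : ℕ} (b : Fin k) : Wt V k := Sum.inr (Sum.inl (Sum.inr b))

/-- A vertex of `A_2`. -/
def vA2 {k : ℕ} (a : Fin k) : Wt V k := Sum.inr (Sum.inr (Sum.inl a))

/-- A vertex of `B_2`. -/
def vB2 {k : ℕ} (b : Fin k) : Wt V k := Sum.inr (Sum.inr (Sum.inr b))

/-- The graph `G'`: `G` together with the two new `(k,k)`-bicliques `G_1` and `G_2`,
all edges between `B_1` and `A`, and all edges between `B` and `A_2`. -/
def newG (G : SimpleGraph V) (k : ℕ) (A B : Set V) : SimpleGraph (Wt V k) :=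
  SimpleGraph.fromEdgeSet
    (Sym2.map Sum.inl '' G.edgeSet ∪
      {e | ∃ a b : Fin k, e = s(vA1 a, vB1 b)} ∪
      {e | ∃ a b : Fin k, e = s(vA2 a, vB2 b)} ∪
      {e | ∃ (b : Fin k) (u : V), u ∈ A ∧ e = s(vB1 b, Sum.inl u)} ∪
      {e | ∃ (u : V) (a : Fin k), u ∈ B ∧ e = s(Sum.inl u, vA2 a)})

/-- `W` is a feasible solution of the spanning variant for the `(k,k)`-biclique property:
`W` is the disjoint union of two `k`-sets with every vertex of one adjacent to every
vertex of the other, i.e. `G[W]` contains a spanning `(k,k)`-biclique. -/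
def SpanBiclique {α : Type*} (G : SimpleGraph α) (k : ℕ) (W : Set α) : Prop :=
  ∃ X Y : Set α, Disjoint X Y ∧ X ∪ Y = W ∧ X.ncard = k ∧ Y.ncard = k ∧
    ∀ x ∈ X, ∀ y ∈ Y, G.Adj x y

/-- A single token-jumping (TJ) step on vertex subsets. -/
def TJStepV {α : Type*} (V1 V2 : Set α) : Prop :=
  ∃ u v, u ∈ V1 ∧ v ∉ V1 ∧ V2 = (V1 \ {u}) ∪ {v}

/-- There is a sequence of TJ steps from `Ws` to `Wt` in which every vertex subset
satisfies the property `P`. -/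
def TJReachV {α : Type*} (P : Set α → Prop) (Ws Wt : Set α) : Prop :=
  ∃ (l : ℕ) (f : ℕ → Set α), f 0 = Ws ∧ f l = Wt ∧
    (∀ k ≤ l, P (f k)) ∧ ∀ k < l, TJStepV (f k) (f (k + 1))

open Set

section TokenJumping

variable {α : Type*} {P : Set α → Prop} {W₁ W₂ W₃ : Set α}

theorem TJReachV.refl (h : P W₁) : TJReachV P W₁ W₁ :=
  ⟨0, fun _ => W₁, rfl, rfl, fun _ _ => h, fun _ h => absurd h (Nat.not_lt_zero _)⟩

theorem TJReachV.cons (hstep : TJStepV W₁ W₂) (h₁ : P W₁) :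
    TJReachV P W₂ W₃ → TJReachV P W₁ W₃
  | ⟨l, f, h0, hl, hP, hs⟩ => by
    refine ⟨l + 1, fun | 0 => W₁ | i + 1 => f i, rfl, hl, ?_, ?_⟩
    · rintro (_ | i) hi
      exacts [h₁, hP i (by omega)]
    · rintro (_ | i) hi
      · show TJStepV W₁ (f 0)
        rwa [h0]
      · exact hs i (by omega)

theorem TJReachV.trans : TJReachV P W₁ W₂ → TJReachV P W₂ W₃ → TJReachV P W₁ W₃
  | ⟨l, f, h0, hl, hP, hs⟩, h => by
    induction l generalizing W₁ f with
    | zero => exact h0 ▸ hl ▸ h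
    | succ l ih =>
      exact .cons (h0 ▸ hs 0 (by omega)) (h0 ▸ hP 0 (by omega))
        (ih (fun i => f (i + 1)) rfl hl (fun i hi => hP _ (by omega)) fun i hi => hs _ (by omega))

theorem TJReachV.exists_tjStepV (Q : Set α → Prop) (h : TJReachV P W₁ W₂) (h₁ : Q W₁)
    (h₂ : ¬Q W₂) : ∃ W W', P W ∧ P W' ∧ TJStepV W W' ∧ Q W ∧ ¬Q W' := by
  obtain ⟨l, f, rfl, rfl, hP, hs⟩ := h
  induction l generalizing f with
  | zero => exact absurd h₁ h₂
  | succ l ih =>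
    by_cases hQ : Q (f 1)
    · exact ih (fun i => f (i + 1)) hQ h₂ (fun i hi => hP _ (by omega))
        fun i hi => hs _ (by omega)
    · exact ⟨f 0, f 1, hP 0 (by omega), hP 1 (by omega), hs 0 (by omega), h₁, hQ⟩

theorem TJStepV.ncard_union_le [Finite α] (h : TJStepV W₁ W₂) :
    (W₁ ∪ W₂).ncard ≤ W₁.ncard + 1 := by
  obtain ⟨u, v, -, -, rfl⟩ := h
  calc (W₁ ∪ (W₁ \ {u} ∪ {v})).ncard ≤ (insert v W₁).ncard := by
        refine ncard_le_ncard ?_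
        intro x
        simp only [mem_union, mem_sdiff, mem_singleton_iff, mem_insert_iff]
        tauto
    _ ≤ W₁.ncard + 1 := ncard_insert_le v W₁

theorem TJReachV.of_forall_ncard_eq [Finite α] (hcard : W₁.ncard = W₂.ncard)
    (hP : ∀ W, W₁ ∩ W₂ ⊆ W → W ⊆ W₁ ∪ W₂ → W.ncard = W₁.ncard → P W) :
    TJReachV P W₁ W₂ := by
  induction hn : (W₁ \ W₂).ncard generalizing W₁ with
  | zero =>
    obtain rfl : W₁ = W₂ := eq_of_subset_of_ncard_le
      (sdiff_eq_empty.mp ((ncard_eq_zero).mp hn)) hcard.ge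
    exact .refl (hP _ inter_subset_left subset_union_left rfl)
  | succ n ih =>
    have hdiff : (W₂ \ W₁).ncard = n + 1 :=
      hn ▸ ((ncard_eq_ncard_iff_ncard_sdiff_eq_ncard_sdiff).mp hcard).symm
    obtain ⟨x, hx₁, hx₂⟩ : (W₁ \ W₂).Nonempty := nonempty_of_ncard_ne_zero (by omega)
    obtain ⟨y, hy₂, hy₁⟩ : (W₂ \ W₁).Nonempty := nonempty_of_ncard_ne_zero (by omega)
    have hcard' : (W₁ \ {x} ∪ {y}).ncard = W₁.ncard := by
      rw [union_singleton, ncard_insert_of_notMem (fun h => hy₁ h.1),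
        ncard_sdiff_singleton_add_one hx₁]
    have hdiff' : (W₁ \ {x} ∪ {y}) \ W₂ = (W₁ \ W₂) \ {x} := by
      ext z
      simp only [mem_union, mem_sdiff, mem_singleton_iff]
      constructor
      · rintro ⟨(h | rfl), hz⟩ <;> tauto
      · tauto
    refine .cons ⟨x, y, hx₁, hy₁, rfl⟩ (hP _ inter_subset_left subset_union_left rfl)
      (ih (hcard'.trans hcard) (fun W hlo hhi hW => hP W ?_ ?_ (hW.trans hcard')) ?_)
    · exact fun z hz => hlo ⟨Or.inl ⟨hz.1, fun h => hx₂ (h ▸ hz.2)⟩, hz.2⟩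
    · exact hhi.trans (union_subset (union_subset (sdiff_subset.trans subset_union_left)
        (singleton_subset_iff.mpr (Or.inr hy₂))) subset_union_right)
    · rw [hdiff', ncard_sdiff_singleton_of_mem (show x ∈ W₁ \ W₂ from ⟨hx₁, hx₂⟩), hn]
      rfl

end TokenJumping

section SpanBiclique

variable {α : Type*} {H : SimpleGraph α} {k : ℕ} {S T T' W N : Set α} {z : α}

theorem SpanBiclique.ncard_eq [Finite α] (h : SpanBiclique H k W) : W.ncard = k + k := by
  obtain ⟨X, Y, hXY, rfl, hX, hY, -⟩ := h
  rw [ncard_union_eq hXY, hX, hY]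

theorem SpanBiclique.exists_subset_adj (h : SpanBiclique H k W) (hz : z ∈ W) :
    ∃ Y ⊆ W, Y.ncard = k ∧ ∀ y ∈ Y, H.Adj z y := by
  obtain ⟨X, Y, -, rfl, hX, hY, hadj⟩ := h
  rcases hz with hz | hz
  · exact ⟨Y, subset_union_right, hY, hadj z hz⟩
  · exact ⟨X, subset_union_left, hX, fun x hx => (hadj x hx z hz).symm⟩

theorem SpanBiclique.lt_ncard_inter [Finite α] (h : SpanBiclique H k W) (hz : z ∈ W)
    (hzN : z ∈ N) (hN : ∀ y, H.Adj z y → y ∈ N) : k < (W ∩ N).ncard := by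
  obtain ⟨Y, hYW, hY, hadj⟩ := h.exists_subset_adj hz
  have hzY : z ∉ Y := fun hzY => (hadj z hzY).ne rfl
  calc k < (insert z Y).ncard := by rw [ncard_insert_of_notMem hzY, hY]; omega
    _ ≤ (W ∩ N).ncard := ncard_le_ncard
      (insert_subset ⟨hz, hzN⟩ fun y hy => ⟨hYW hy, hN y (hadj y hy)⟩)

theorem SpanBiclique.of_subset [Finite α] (hSW : S ⊆ W) (hS : S.ncard = k) (hW : W.ncard = k + k)
    (hadj : ∀ s ∈ S, ∀ w ∈ W \ S, H.Adj s w) : SpanBiclique H k W :=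
  ⟨S, W \ S, disjoint_sdiff_right, union_sdiff_cancel hSW, hS,
    by rw [ncard_sdiff hSW, hW, hS]; omega, hadj⟩

/-- Stated as `T ∪ S → S ∪ T'` so that consecutive phases chain without rewriting. -/
theorem SpanBiclique.tjReachV_union [Finite α] (hST : Disjoint S T) (hST' : Disjoint S T')
    (hS : S.ncard = k) (hT : T.ncard = k) (hT' : T'.ncard = k)
    (hadj : ∀ s ∈ S, ∀ x ∈ T ∪ T', H.Adj s x) : TJReachV (SpanBiclique H k) (T ∪ S) (S ∪ T') := by
  have h₁ : (T ∪ S).ncard = k + k := by rw [ncard_union_eq hST.symm, hT, hS]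
  have h₂ : (S ∪ T').ncard = k + k := by rw [ncard_union_eq hST', hS, hT']
  refine .of_forall_ncard_eq (h₁.trans h₂.symm) fun W hlo hhi hW =>
    .of_subset (fun s hs => hlo ⟨Or.inr hs, Or.inl hs⟩) hS (hW.trans h₁) fun s hs w hw => ?_
  refine hadj s hs w ?_
  rcases hhi hw.1 with (hwT | hwS) | (hwS | hwT')
  exacts [Or.inl hwT, absurd hwS hw.2, absurd hwS hw.2, Or.inr hwT']

theorem SpanBiclique.comap {β : Type*} {f : β → α} (h : SpanBiclique H k W)
    (hf : Function.Injective f) (hW : W ⊆ range f) : SpanBiclique (H.comap f) k (f ⁻¹' W) := by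
  obtain ⟨X, Y, hXY, rfl, hX, hY, hadj⟩ := h
  refine ⟨f ⁻¹' X, f ⁻¹' Y, hXY.preimage f, preimage_union, ?_, ?_,
    fun x hx y hy => hadj _ hx _ hy⟩
  · rw [ncard_preimage_of_injective_subset_range hf (subset_union_left.trans hW), hX]
  · rw [ncard_preimage_of_injective_subset_range hf (subset_union_right.trans hW), hY]

end SpanBiclique

def Vs (V : Type*) (k : ℕ) : Set (Wt V k) := range (vA1 (V := V)) ∪ range vB1

def Vt (V : Type*) (k : ℕ) : Set (Wt V k) := range (vA2 (V := V)) ∪ range vB2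

section Gadget

variable {k : ℕ} {G : SimpleGraph V} {A B : Set V} {u v : V} {a b : Fin k} {y z : Wt V k}

theorem image_sym2Map_inl_edgeSet {β : Type*} :
    Sym2.map Sum.inl '' G.edgeSet = (G.map (Function.Embedding.inl (β := β))).edgeSet :=
  (SimpleGraph.edgeSet_map Function.Embedding.inl G).symm

theorem newG_adj_inl_inl : (newG G k A B).Adj (.inl u) (.inl v) ↔ G.Adj u v := by
  simp [newG, vA1, vB1, vA2, vB2, image_sym2Map_inl_edgeSet]

theorem comap_inl_newG : (newG G k A B).comap Sum.inl = G := by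
  ext u v
  exact newG_adj_inl_inl

theorem newG_adj_vB1_vA1 : (newG G k A B).Adj (vB1 b) (vA1 a) := by
  simp [newG, vA1, vB1, vA2, vB2]

theorem newG_adj_vB1_inl (hu : u ∈ A) : (newG G k A B).Adj (vB1 b) (.inl u) := by
  simp [newG, vA1, vB1, vA2, vB2, hu]

theorem newG_adj_inl_vA2 (hu : u ∈ B) : (newG G k A B).Adj (.inl u) (vA2 a) := by
  simp [newG, vA1, vB1, vA2, vB2, hu]

theorem newG_adj_vA2_vB2 : (newG G k A B).Adj (vA2 a) (vB2 b) := by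
  simp [newG, vA1, vB1, vA2, vB2]

theorem mem_of_newG_adj_of_mem_Vs (hz : z ∈ Vs V k) (h : (newG G k A B).Adj z y) :
    y ∈ Vs V k ∪ Sum.inl '' A := by
  rcases y with _ | ((_ | _) | (_ | _)) <;> rcases z with _ | ((_ | _) | (_ | _)) <;>
    simp_all [Vs, newG, vA1, vB1, vA2, vB2, image_sym2Map_inl_edgeSet]

theorem mem_of_newG_adj_of_mem_Vt (hz : z ∈ Vt V k) (h : (newG G k A B).Adj z y) :
    y ∈ Vt V k ∪ Sum.inl '' B := by
  rcases y with _ | ((_ | _) | (_ | _)) <;> rcases z with _ | ((_ | _) | (_ | _)) <;>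
    simp_all [Vt, newG, vA1, vB1, vA2, vB2, image_sym2Map_inl_edgeSet]

theorem disjoint_Vs_union_Vt_union (hAB : Disjoint A B) :
    Disjoint (Vs V k ∪ Sum.inl '' A) (Vt V k ∪ Sum.inl '' B) := by
  rw [disjoint_left]
  rintro (u | ((_ | _) | (_ | _))) <;> simp [Vs, Vt, vA1, vB1, vA2, vB2]
  exact fun hA => disjoint_left.mp hAB hA

theorem disjoint_Vt_Vs : Disjoint (Vt V k) (Vs V k) := by
  simp [disjoint_left, Vs, Vt, vA1, vB1, vA2, vB2]

theorem subset_range_inl_of_disjoint {W : Set (Wt V k)} (hs : Disjoint W (Vs V k))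
    (ht : Disjoint W (Vt V k)) : W ⊆ range Sum.inl := by
  rintro (u | ((a | b) | (a | b))) hw
  · exact mem_range_self u
  · exact (disjoint_left.mp hs hw (Or.inl (mem_range_self a))).elim
  · exact (disjoint_left.mp hs hw (Or.inr (mem_range_self b))).elim
  · exact (disjoint_left.mp ht hw (Or.inl (mem_range_self a))).elim
  · exact (disjoint_left.mp ht hw (Or.inr (mem_range_self b))).elim

theorem lt_ncard_union_of_mem_Vs_of_mem_Vt [Finite V] (hAB : Disjoint A B)
    {W W' : Set (Wt V k)} (hW : SpanBiclique (newG G k A B) k W)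
    (hW' : SpanBiclique (newG G k A B) k W') (hz : z ∈ W ∩ Vs V k) (hy : y ∈ W' ∩ Vt V k) :
    k + k + 1 < (W ∪ W').ncard := by
  have h₁ := hW.lt_ncard_inter hz.1 (Or.inl hz.2) fun _ => mem_of_newG_adj_of_mem_Vs hz.2
  have h₂ := hW'.lt_ncard_inter hy.1 (Or.inl hy.2) fun _ => mem_of_newG_adj_of_mem_Vt hy.2
  calc k + k + 1 < (W ∩ (Vs V k ∪ .inl '' A)).ncard + (W' ∩ (Vt V k ∪ .inl '' B)).ncard := by
        omega
    _ = (W ∩ (Vs V k ∪ .inl '' A) ∪ W' ∩ (Vt V k ∪ .inl '' B)).ncard :=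
      (ncard_union_eq ((disjoint_Vs_union_Vt_union hAB).mono inter_subset_right
        inter_subset_right)).symm
    _ ≤ (W ∪ W').ncard := ncard_le_ncard (union_subset_union inter_subset_left inter_subset_left)

theorem exists_spanBiclique_of_tjReachV_newG [Finite V] (hAB : Disjoint A B) (hk : 0 < k)
    (h : TJReachV (SpanBiclique (newG G k A B) k) (Vs V k) (Vt V k)) :
    ∃ W, SpanBiclique G k W := by
  have hVs : ¬Disjoint (Vs V k) (Vs V k) :=
    not_disjoint_iff.mpr ⟨vA1 ⟨0, hk⟩, Or.inl (mem_range_self _), Or.inl (mem_range_self _)⟩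
  obtain ⟨W, W', hW, hW', hstep, hWs, hW's⟩ :=
    h.exists_tjStepV (fun W => ¬Disjoint W (Vs V k)) hVs (not_not.mpr disjoint_Vt_Vs)
  rw [not_not] at hW's
  have hW't : Disjoint W' (Vt V k) := by
    by_contra hmeet
    obtain ⟨z, hz⟩ := not_disjoint_iff.mp hWs
    obtain ⟨y, hy⟩ := not_disjoint_iff.mp hmeet
    have := lt_ncard_union_of_mem_Vs_of_mem_Vt hAB hW hW' hz hy
    have := hstep.ncard_union_le
    rw [hW.ncard_eq] at this
    omega
  exact ⟨_, comap_inl_newG ▸ hW'.comap Sum.inl_injective (subset_range_inl_of_disjoint hW's hW't)⟩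

theorem tjReachV_newG_of_forall_adj [Finite V] {X Y : Set V} (hXA : X ⊆ A) (hYB : Y ⊆ B)
    (hXY : Disjoint X Y) (hX : X.ncard = k) (hY : Y.ncard = k)
    (hadj : ∀ x ∈ X, ∀ y ∈ Y, G.Adj x y) :
    TJReachV (SpanBiclique (newG G k A B) k) (Vs V k) (Vt V k) := by
  have hrange {f : Fin k → Wt V k} (hf : Function.Injective f) : (range f).ncard = k := by
    rw [ncard_range_of_injective hf, Nat.card_eq_fintype_card, Fintype.card_fin]
  have hA₁ := hrange (f := vA1) fun a b h => by simpa [vA1] using h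
  have hB₁ := hrange (f := vB1) fun a b h => by simpa [vB1] using h
  have hA₂ := hrange (f := vA2) fun a b h => by simpa [vA2] using h
  have hB₂ := hrange (f := vB2) fun a b h => by simpa [vB2] using h
  have hX' : (Sum.inl '' X : Set (Wt V k)).ncard = k := by
    rw [ncard_image_of_injective _ Sum.inl_injective, hX]
  have hY' : (Sum.inl '' Y : Set (Wt V k)).ncard = k := by
    rw [ncard_image_of_injective _ Sum.inl_injective, hY]
  have hXY' : Disjoint (Sum.inl '' X : Set (Wt V k)) (Sum.inl '' Y) :=
    (disjoint_image_iff Sum.inl_injective).mpr hXY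
  have h₁ := SpanBiclique.tjReachV_union (H := newG G k A B)
    (by simp [disjoint_left, vA1, vB1]) (by simp [disjoint_left, vB1]) hB₁ hA₁ hX' (by
      rintro _ ⟨b, rfl⟩ _ (⟨a, rfl⟩ | ⟨x, hx, rfl⟩)
      exacts [newG_adj_vB1_vA1, newG_adj_vB1_inl (hXA hx)])
  have h₂ := SpanBiclique.tjReachV_union (H := newG G k A B)
    (by simp [disjoint_left, vB1]) hXY' hX' hB₁ hY' (by
      rintro _ ⟨x, hx, rfl⟩ _ (⟨b, rfl⟩ | ⟨y, hy, rfl⟩)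
      exacts [(newG_adj_vB1_inl (hXA hx)).symm, newG_adj_inl_inl.mpr (hadj x hx y hy)])
  have h₃ := SpanBiclique.tjReachV_union (H := newG G k A B)
    hXY'.symm (by simp [disjoint_left, vA2]) hY' hX' hA₂ (by
      rintro _ ⟨y, hy, rfl⟩ _ (⟨x, hx, rfl⟩ | ⟨a, rfl⟩)
      exacts [newG_adj_inl_inl.mpr (hadj x hx y hy).symm, newG_adj_inl_vA2 (hYB hy)])
  have h₄ := SpanBiclique.tjReachV_union (H := newG G k A B)
    (by simp [disjoint_left, vA2]) (by simp [disjoint_left, vA2, vB2]) hA₂ hY' hB₂ (by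
      rintro _ ⟨a, rfl⟩ _ (⟨y, hy, rfl⟩ | ⟨b, rfl⟩)
      exacts [(newG_adj_inl_vA2 (hYB hy)).symm, newG_adj_vA2_vB2])
  exact h₁.trans (h₂.trans (h₃.trans h₄))

end Gadget

theorem _root_.SimpleGraph.IsBipartiteWith.subset_of_forall_adj {G : SimpleGraph V}
    {s t X Y : Set V} {x₀ y₀ : V} (h : G.IsBipartiteWith s t) (hadj : ∀ x ∈ X, ∀ y ∈ Y, G.Adj x y)
    (hx₀ : x₀ ∈ X) (hx₀s : x₀ ∈ s) (hy₀ : y₀ ∈ Y) : X ⊆ s ∧ Y ⊆ t := by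
  have hYt : Y ⊆ t := fun y hy => h.mem_of_mem_adj hx₀s (hadj x₀ hx₀ y hy)
  exact ⟨fun x hx => h.mem_of_mem_adj' (hYt hy₀) (hadj x hx y₀ hy₀), hYt⟩

theorem stmt18_general [Fintype V] (G : SimpleGraph V) (k : ℕ) (hk : 1 ≤ k)
    (A B : Set V) (hdisj : Disjoint A B)
    (hbip : ∀ u v, G.Adj u v → (u ∈ A ∧ v ∈ B) ∨ (u ∈ B ∧ v ∈ A)) :
    (∃ X Y : Set V, Disjoint X Y ∧ X.ncard = k ∧ Y.ncard = k ∧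
        ∀ x ∈ X, ∀ y ∈ Y, G.Adj x y) ↔
      TJReachV (SpanBiclique (newG G k A B) k)
        (Set.range (vA1 (V := V)) ∪ Set.range (vB1 (V := V)))
        (Set.range (vA2 (V := V)) ∪ Set.range (vB2 (V := V))) := by
  have hG : G.IsBipartiteWith A B := ⟨hdisj, hbip⟩
  constructor
  · rintro ⟨X, Y, hXY, hX, hY, hadj⟩
    obtain ⟨x₀, hx₀⟩ := nonempty_of_ncard_ne_zero (s := X) (by omega)
    obtain ⟨y₀, hy₀⟩ := nonempty_of_ncard_ne_zero (s := Y) (by omega)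
    rcases hbip x₀ y₀ (hadj x₀ hx₀ y₀ hy₀) with ⟨hx₀A, -⟩ | ⟨hx₀B, -⟩
    · obtain ⟨hXA, hYB⟩ := hG.subset_of_forall_adj hadj hx₀ hx₀A hy₀
      exact tjReachV_newG_of_forall_adj hXA hYB hXY hX hY hadj
    · obtain ⟨hXB, hYA⟩ := hG.symm.subset_of_forall_adj hadj hx₀ hx₀B hy₀
      exact tjReachV_newG_of_forall_adj hYA hXB hXY.symm hY hX
        fun y hy x hx => (hadj x hx y hy).symm
  · intro h
    obtain ⟨_, X, Y, hXY, -, hX, hY, hadj⟩ := exists_spanBiclique_of_tjReachV_newG hdisj hk h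
    exact ⟨X, Y, hXY, hX, hY, hadj⟩

theorem stmt18 [Fintype V] [DecidableEq V] (G : SimpleGraph V) (k : ℕ) (hk : 1 ≤ k)
    (A B : Set V) (hdisj : Disjoint A B) (hcover : A ∪ B = Set.univ)
    (hbip : ∀ u v, G.Adj u v → (u ∈ A ∧ v ∈ B) ∨ (u ∈ B ∧ v ∈ A)) :
    (∃ X Y : Set V, Disjoint X Y ∧ X.ncard = k ∧ Y.ncard = k ∧
        ∀ x ∈ X, ∀ y ∈ Y, G.Adj x y) ↔
      TJReachV (SpanBiclique (newG G k A B) k)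
        (Set.range (vA1 (V := V)) ∪ Set.range (vB1 (V := V)))
        (Set.range (vA2 (V := V)) ∪ Set.range (vB2 (V := V))) :=
  stmt18_general G k hk A B hdisj hbip

end Stmt18
end

section
/- Let G be a simple graph with V(G) = {v_1, …, v_n}, and let G' be the graph with vertex set L ∪ R, where L = {l_1, …, l_n} and R = {r_1, …, r_n}, and with edge set consisting of l_il_j and r_ir_j for every edge v_iv_j of G, together with the connecting edges l_ir_i for every i. For a vertex subset V' ⊆ V(G'), a vertex of V' is exposed in V' if its corresponding vertex (its partner under the matching l_i ↔ r_i) does not belong to V'. If V' contains an exposed vertex l_i ∈ L and an exposed vertex r_j ∈ R, then the induced subgraph G'[V'] has diameter greater than two; in particular, the distance between l_i and r_j in G'[V'] is greater than two (possibly infinite). -/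
namespace Stmt19

variable {V : Type*}

/-- The graph `G'` on two copies `L = Sum.inl '' V(G)` and `R = Sum.inr '' V(G)` of the
vertices of `G`: each copy carries a copy of the edges of `G`, and each vertex is joined
to its corresponding vertex in the other copy by a connecting edge. -/
def newG (G : SimpleGraph V) : SimpleGraph (V ⊕ V) :=
  SimpleGraph.fromEdgeSet
    (Sym2.map Sum.inl '' G.edgeSet ∪ Sym2.map Sum.inr '' G.edgeSet ∪
      {e | ∃ v : V, e = s(Sum.inl v, Sum.inr v)})

lemma adj_mixed {G : SimpleGraph V} {x y : V}
    (h : (newG G).Adj (Sum.inl x) (Sum.inr y)) : x = y := by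
  have h1 := h.1
  rcases h1 with (⟨e, _, he⟩ | ⟨e, _, he⟩) | ⟨v, hv⟩
  · induction e using Sym2.inductionOn with
    | hf u w =>
      rw [Sym2.map_pair_eq, Sym2.eq_iff] at he
      rcases he with ⟨_, h2⟩ | ⟨h2, _⟩ <;> simp at h2
  · induction e using Sym2.inductionOn with
    | hf u w =>
      rw [Sym2.map_pair_eq, Sym2.eq_iff] at he
      rcases he with ⟨h2, _⟩ | ⟨_, h2⟩ <;> simp at h2
  · rw [Sym2.eq_iff] at hv
    rcases hv with ⟨h1, h2⟩ | ⟨h1, _⟩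
    · simp only [Sum.inl.injEq, Sum.inr.injEq] at h1 h2; exact h1.trans h2.symm
    · simp at h1

theorem stmt19 [Fintype V] [DecidableEq V] (G : SimpleGraph V) (V' : Set (V ⊕ V))
    (a b : V)
    (hla : Sum.inl a ∈ V') (hra : Sum.inr a ∉ V')
    (hrb : Sum.inr b ∈ V') (hlb : Sum.inl b ∉ V') :
    2 < ((newG G).induce V').ediam ∧
      ∀ p : ((newG G).induce V').Walk ⟨Sum.inl a, hla⟩ ⟨Sum.inr b, hrb⟩, 2 < p.length := by
  have key : ∀ p : ((newG G).induce V').Walk ⟨Sum.inl a, hla⟩ ⟨Sum.inr b, hrb⟩,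
      2 < p.length := by
    intro p
    by_contra hlen
    push_neg at hlen
    cases p with
    | cons h q =>
      rename_i x
      cases q with
      | nil =>
        have : (newG G).Adj (Sum.inl a) (Sum.inr b) := h
        have := adj_mixed this
        subst this
        exact hra hrb
      | cons h' r =>
        rename_i y
        cases r with
        | nil =>
          -- edges: inl a - x, x - inr b, x ∈ V'
          obtain ⟨xv, hxv⟩ := x
          rcases xv with c | c
          · have : (newG G).Adj (Sum.inl c) (Sum.inr b) := h'
            have := adj_mixed this
            subst this
            exact hlb hxv
          · have : (newG G).Adj (Sum.inl a) (Sum.inr c) := h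
            have := adj_mixed this
            subst this
            exact hra hxv
        | cons h'' r' =>
          simp [SimpleGraph.Walk.length_cons] at hlen
  refine ⟨?_, key⟩
  have hedist : 2 < ((newG G).induce V').edist ⟨Sum.inl a, hla⟩ ⟨Sum.inr b, hrb⟩ := by
    by_cases hr : ((newG G).induce V').Reachable ⟨Sum.inl a, hla⟩ ⟨Sum.inr b, hrb⟩
    · obtain ⟨p, hp⟩ := hr.exists_walk_length_eq_edist
      rw [← hp]
      exact_mod_cast key p
    · rw [SimpleGraph.edist_eq_top_of_not_reachable hr]
      exact lt_of_lt_of_le (show (2:ℕ∞) < 3 by norm_num) le_top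
  exact lt_of_lt_of_le hedist SimpleGraph.edist_le_ediam

end Stmt19
end
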